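/- Let G = (X_L, X_R ∪ U, E) be a bipartite graph as in Proposition 1 (with partitions X_L^{C_1}, …, X_L^{C_{r+1}}, U^{C_1}, …, U^{C_{r+1}} and E = E_XX ∪ E_1 ∪ … ∪ E_{r+1}), and let M be its augmented incidence matrix. Then the (n_V + r) × n_E submatrix of M consisting of its first n_E columns (i.e., the columns indexed by the edges of G) is totally unimodular. -/

import Mathlib

/-- The side of a vertex in the bipartite graph `G = (X_L, X_R ∪ U, E)`. -/
inductive BipSide : Type
  | XL  -- a vertex of `X_L`
  | XR  -- a vertex of `X_R`
  | UU  -- a vertex of `U`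
deriving DecidableEq

/-- A bipartite graph `G = (X_L, X_R ∪ U, E)` with `n_V` vertices and `n_E` edges, in which
`X_L` is partitioned into `r + 1` disjoint subsets `X_L^{C_1}, …, X_L^{C_{r+1}}` and `U` is
partitioned into `r + 1` disjoint subsets `U^{C_1}, …, U^{C_{r+1}}`, and
`E = E_XX ∪ E_1 ∪ ⋯ ∪ E_{r+1}`, where `E_XX` is a set of edges between `X_L` and `X_R` and,
for each `i`, `E_i` is a set of edges between `X_L^{C_i}` and `U^{C_i}`.
Vertices are written `v_1, …, v_{n_V}` (i.e. indexed by `Fin nV`) and edges `e_1, …, e_{n_E}`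
(indexed by `Fin nE`).  `side v` tells which of `X_L`, `X_R`, `U` the vertex `v` lies in;
`group v` tells which cell `C_i` of the partition a vertex of `X_L` (resp. of `U`) lies in;
`endL e` and `endR e` are the two endpoints of the edge `e` (in `X_L` and in `X_R ∪ U`
respectively); `eClass e = none` means `e ∈ E_XX` while `eClass e = some i` means `e ∈ E_{i+1}`. -/
structure SCCBipartite (nV nE r : ℕ) : Type where
  side : Fin nV → BipSide
  group : Fin nV → Fin (r + 1)
  endL : Fin nE → Fin nV
  endR : Fin nE → Fin nV
  eClass : Fin nE → Option (Fin (r + 1))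
  endL_XL : ∀ e, side (endL e) = BipSide.XL
  eXX_mem : ∀ e, eClass e = none → side (endR e) = BipSide.XR
  eI_mem : ∀ e i, eClass e = some i →
    side (endR e) = BipSide.UU ∧ group (endL e) = i ∧ group (endR e) = i
  edge_inj : Function.Injective fun e => (endL e, endR e)

/-- The augmented incidence matrix `M` of such a bipartite graph: an
`(n_V + r) × (n_E + r)` integer matrix with `M i j = 1` if `i ≤ n_V`, `j ≤ n_E` and `v_i` is an
endpoint of `e_j`; `M i j = -1` if `i > n_V` and `e_j ∈ E_{i - n_V}`; `M i j = 1` if `i > n_V`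
and `j = n_E + i - n_V`; and `M i j = 0` otherwise. -/
def augM {nV nE r : ℕ} (G : SCCBipartite nV nE r) : Matrix (Fin (nV + r)) (Fin (nE + r)) ℤ :=
  Matrix.of fun i j =>
    if hi : (i : ℕ) < nV then
      if hj : (j : ℕ) < nE then
        (if G.endL ⟨j, hj⟩ = ⟨i, hi⟩ ∨ G.endR ⟨j, hj⟩ = ⟨i, hi⟩ then 1 else 0)
      else 0
    else
      if hj : (j : ℕ) < nE then
        (if G.eClass ⟨j, hj⟩ = some ⟨(i : ℕ) - nV, by have := i.isLt; omega⟩ then -1 else 0)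
      else (if (i : ℕ) - nV = (j : ℕ) - nE then 1 else 0)

namespace SCCAux

open Matrix

variable {nV nE r : ℕ}

lemma sign_mem_zero : (0 : ℤ) ∈ Set.range (SignType.cast (α := ℤ)) := ⟨0, by simp⟩
lemma sign_mem_one : (1 : ℤ) ∈ Set.range (SignType.cast (α := ℤ)) := ⟨1, by simp⟩
lemma sign_mem_neg_one : (-1 : ℤ) ∈ Set.range (SignType.cast (α := ℤ)) := ⟨-1, by simp⟩

lemma sign_mem_mul {a b : ℤ} (ha : a ∈ Set.range (SignType.cast (α := ℤ)))
    (hb : b ∈ Set.range (SignType.cast (α := ℤ))) :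
    a * b ∈ Set.range (SignType.cast (α := ℤ)) := by
  obtain ⟨s, rfl⟩ := ha; obtain ⟨t, rfl⟩ := hb
  exact ⟨s * t, SignType.coe_mul s t⟩

lemma sign_mem_pow_neg_one (n : ℕ) :
    ((-1 : ℤ) ^ n) ∈ Set.range (SignType.cast (α := ℤ)) := by
  rcases Nat.even_or_odd n with h | h
  · rw [h.neg_one_pow]; exact sign_mem_one
  · rw [h.neg_one_pow]; exact sign_mem_neg_one

lemma augM_apply_lt (G : SCCBipartite nV nE r) (v : Fin (nV + r)) (e : Fin nE)
    (hv : (v : ℕ) < nV) :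
    augM G v (Fin.castAdd r e) =
      if G.endL e = ⟨v, hv⟩ ∨ G.endR e = ⟨v, hv⟩ then 1 else 0 := by
  have he : ((Fin.castAdd r e : Fin (nE + r)) : ℕ) < nE := by simp
  have hee : (⟨((Fin.castAdd r e : Fin (nE + r)) : ℕ), he⟩ : Fin nE) = e := by
    apply Fin.ext; simp
  unfold augM
  rw [Matrix.of_apply, dif_pos hv, dif_pos he, hee]

lemma augM_apply_ge (G : SCCBipartite nV nE r) (v : Fin (nV + r)) (e : Fin nE)
    (hv : ¬ (v : ℕ) < nV) :
    augM G v (Fin.castAdd r e) =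
      if G.eClass e = some ⟨(v : ℕ) - nV, by have := v.isLt; omega⟩ then -1 else 0 := by
  have he : ((Fin.castAdd r e : Fin (nE + r)) : ℕ) < nE := by simp
  have hee : (⟨((Fin.castAdd r e : Fin (nE + r)) : ℕ), he⟩ : Fin nE) = e := by
    apply Fin.ext; simp
  unfold augM
  rw [Matrix.of_apply, dif_neg hv, dif_pos he, hee]

lemma augM_apply_ge' (G : SCCBipartite nV nE r) (v : Fin (nV + r)) (e : Fin nE)
    (w : Fin (r + 1)) (hw : (v : ℕ) = nV + (w : ℕ)) :
    augM G v (Fin.castAdd r e) = if G.eClass e = some w then -1 else 0 := by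
  have hv : ¬ (v : ℕ) < nV := by omega
  rw [augM_apply_ge G v e hv]
  apply if_congr _ rfl rfl
  constructor
  · intro h
    rw [h]
    apply congrArg
    apply Fin.ext
    show (v : ℕ) - nV = (w : ℕ)
    omega
  · intro h
    rw [h]
    apply congrArg
    apply Fin.ext
    show (w : ℕ) = (v : ℕ) - nV
    omega

lemma augM_entry_mem (G : SCCBipartite nV nE r) (v : Fin (nV + r)) (j : Fin (nE + r)) :
    augM G v j ∈ Set.range (SignType.cast (α := ℤ)) := by
  unfold augM
  rw [Matrix.of_apply]
  split_ifs <;>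
    first
      | exact sign_mem_one
      | exact sign_mem_zero
      | exact sign_mem_neg_one

lemma endL_ne_of_UU (G : SCCBipartite nV nE r) {u : Fin nV} (hu : G.side u = BipSide.UU)
    (e : Fin nE) : G.endL e ≠ u := by
  intro h
  have hx := G.endL_XL e
  rw [h, hu] at hx
  exact BipSide.noConfusion hx

lemma eClass_of_endR (G : SCCBipartite nV nE r) {u : Fin nV} (hu : G.side u = BipSide.UU)
    {e : Fin nE} (he : G.endR e = u) : G.eClass e = some (G.group u) := by
  cases hc : G.eClass e with
  | none =>
      have hx := G.eXX_mem e hc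
      rw [he, hu] at hx
      exact BipSide.noConfusion hx
  | some i =>
      obtain ⟨-, -, h3⟩ := G.eI_mem e i hc
      rw [he] at h3
      rw [h3]

/-- Move a `U`-vertex `u` to the `X_R` side, declassifying all its edges. -/
def moveU (G : SCCBipartite nV nE r) (u : Fin nV) (hu : G.side u = BipSide.UU) :
    SCCBipartite nV nE r where
  side v := if v = u then BipSide.XR else G.side v
  group := G.group
  endL := G.endL
  endR := G.endR
  eClass e := if G.endR e = u then none else G.eClass e
  endL_XL e := by
    have h := G.endL_XL e
    have hne : G.endL e ≠ u := endL_ne_of_UU G hu e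
    simp [hne, h]
  eXX_mem e hc := by
    by_cases h : G.endR e = u
    · simp [h]
    · simp only [if_neg h] at hc
      have hx := G.eXX_mem e hc
      simp [h, hx]
  eI_mem e i hc := by
    by_cases h : G.endR e = u
    · simp [h] at hc
    · simp only [if_neg h] at hc
      obtain ⟨h1, h2, h3⟩ := G.eI_mem e i hc
      exact ⟨by simp [h, h1], h2, h3⟩
  edge_inj := G.edge_inj

/-- The number of classed edges. -/
def msr (G : SCCBipartite nV nE r) : ℕ :=
  (Finset.univ.filter fun e => (G.eClass e).isSome).card

lemma msr_moveU_lt (G : SCCBipartite nV nE r) (u : Fin nV) (hu : G.side u = BipSide.UU)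
    {e₀ : Fin nE} (he₀ : G.endR e₀ = u) : msr (moveU G u hu) < msr G := by
  apply Finset.card_lt_card
  constructor
  · intro e he
    simp only [Finset.mem_filter, Finset.mem_univ, true_and] at he ⊢
    by_cases h : G.endR e = u
    · simp [moveU, h] at he
    · simpa [moveU, h] using he
  · intro hsub
    have h1 : e₀ ∈ Finset.univ.filter fun e => (G.eClass e).isSome := by
      simp [eClass_of_endR G hu he₀]
    have h2 := hsub h1
    rw [Finset.mem_filter] at h2
    simp [moveU, he₀] at h2

lemma augM_apply_vertex (G : SCCBipartite nV nE r) (w : Fin nV) (e : Fin nE) :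
    augM G (Fin.castAdd r w) (Fin.castAdd r e) =
      if G.endL e = w ∨ G.endR e = w then 1 else 0 := by
  have hw : ((Fin.castAdd r w : Fin (nV + r)) : ℕ) < nV := by simp
  rw [augM_apply_lt G _ e hw]
  have hww : (⟨((Fin.castAdd r w : Fin (nV + r)) : ℕ), hw⟩ : Fin nV) = w := by
    apply Fin.ext; simp
  rw [hww]

lemma augM_moveU_apply (G : SCCBipartite nV nE r) (u : Fin nV) (hu : G.side u = BipSide.UU)
    (v : Fin (nV + r)) (e : Fin nE) :
    augM (moveU G u hu) v (Fin.castAdd r e) =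
      augM G v (Fin.castAdd r e) +
        (if (v : ℕ) = nV + (G.group u : ℕ) then augM G (Fin.castAdd r u) (Fin.castAdd r e)
          else 0) := by
  have hLu : G.endL e ≠ u := endL_ne_of_UU G hu e
  by_cases hv : (v : ℕ) < nV
  · have hng : ¬ ((v : ℕ) = nV + (G.group u : ℕ)) := by omega
    rw [augM_apply_lt (moveU G u hu) v e hv, augM_apply_lt G v e hv, if_neg hng, add_zero]
    rfl
  · obtain ⟨w, hw⟩ : ∃ w : Fin (r + 1), (v : ℕ) = nV + (w : ℕ) := by
      refine ⟨⟨(v : ℕ) - nV, by have := v.isLt; omega⟩, ?_⟩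
      show (v : ℕ) = nV + ((v : ℕ) - nV)
      omega
    rw [augM_apply_ge' (moveU G u hu) v e w hw, augM_apply_ge' G v e w hw, augM_apply_vertex]
    by_cases hR : G.endR e = u
    · have hcl : G.eClass e = some (G.group u) := eClass_of_endR G hu hR
      have hcl' : (moveU G u hu).eClass e = none := by simp [moveU, hR]
      rw [hcl', hcl, if_neg (by simp : ¬ ((none : Option (Fin (r + 1))) = some w))]
      by_cases hgw : G.group u = w
      · rw [if_pos (congrArg some hgw), if_pos (show (v : ℕ) = nV + (G.group u : ℕ) by
            rw [hgw]; exact hw), if_pos (Or.inr hR)]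
        norm_num
      · rw [if_neg (fun hc => hgw (Option.some_injective _ hc)),
            if_neg (show ¬ ((v : ℕ) = nV + (G.group u : ℕ)) by
              intro hvg
              exact hgw (Fin.ext (by omega)))]
        norm_num
    · have hcl' : (moveU G u hu).eClass e = G.eClass e := by simp [moveU, hR]
      rw [hcl', if_neg (show ¬ (G.endL e = u ∨ G.endR e = u) by rintro (h | h); exacts [hLu h, hR h])]
      simp

end SCCAux


namespace SCCAux

open Matrix

variable {nV nE r : ℕ}

/-- Sign vector used for the linear dependency of rows. -/
def eps (G : SCCBipartite nV nE r) (v : Fin (nV + r)) : ℤ :=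
  if h : (v : ℕ) < nV then (if G.side ⟨v, h⟩ = BipSide.XR then -1 else 1) else 1

lemma eps_ne_zero (G : SCCBipartite nV nE r) (v : Fin (nV + r)) : eps G v ≠ 0 := by
  unfold eps
  split_ifs <;> norm_num

lemma eps_vertex (G : SCCBipartite nV nE r) (w : Fin nV) :
    eps G (Fin.castAdd r w) = if G.side w = BipSide.XR then -1 else 1 := by
  unfold eps
  have hw : ((Fin.castAdd r w : Fin (nV + r)) : ℕ) < nV := by simp
  rw [dif_pos hw]
  have hww : (⟨((Fin.castAdd r w : Fin (nV + r)) : ℕ), hw⟩ : Fin nV) = w := by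
    apply Fin.ext; simp
  rw [hww]

lemma eps_class (G : SCCBipartite nV nE r) {v : Fin (nV + r)} (hv : ¬ (v : ℕ) < nV) :
    eps G v = 1 := dif_neg hv

lemma support_classify (G : SCCBipartite nV nE r) {v : Fin (nV + r)} {e : Fin nE}
    (h : augM G v (Fin.castAdd r e) ≠ 0) :
    v = Fin.castAdd r (G.endL e) ∨ v = Fin.castAdd r (G.endR e) ∨
      ∃ t : Fin (r + 1), G.eClass e = some t ∧ (v : ℕ) = nV + (t : ℕ) := by
  by_cases hv : (v : ℕ) < nV
  · rw [augM_apply_lt G v e hv] at h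
    by_cases hc : G.endL e = ⟨(v : ℕ), hv⟩ ∨ G.endR e = ⟨(v : ℕ), hv⟩
    · rcases hc with hc | hc
      · left; apply Fin.ext; simp [hc]
      · right; left; apply Fin.ext; simp [hc]
    · rw [if_neg hc] at h; exact absurd rfl h
  · obtain ⟨w, hw⟩ : ∃ w : Fin (r + 1), (v : ℕ) = nV + (w : ℕ) := by
      refine ⟨⟨(v : ℕ) - nV, by have := v.isLt; omega⟩, ?_⟩
      show (v : ℕ) = nV + ((v : ℕ) - nV)
      omega
    rw [augM_apply_ge' G v e w hw] at h
    by_cases hc : G.eClass e = some w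
    · exact Or.inr (Or.inr ⟨w, hc, hw⟩)
    · rw [if_neg hc] at h; exact absurd rfl h

lemma sum_two {k : ℕ} (F : Fin k → ℤ) (y₁ y₂ : Fin k) (hne : y₁ ≠ y₂)
    (h : ∀ x, F x = (if x = y₁ then 1 else 0) + (if x = y₂ then -1 else 0)) :
    ∑ x, F x = 0 := by
  rw [Finset.sum_congr rfl fun x _ => h x, Finset.sum_add_distrib,
    Finset.sum_ite_eq' Finset.univ y₁ fun _ => (1 : ℤ),
    Finset.sum_ite_eq' Finset.univ y₂ fun _ => (-1 : ℤ)]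
  simp

lemma column_zero_none (G : SCCBipartite nV nE r) {k : ℕ} (f : Fin k → Fin (nV + r))
    (hf : Function.Injective f) (e : Fin nE) (he : G.eClass e = none)
    (y₁ y₂ : Fin k) (h₁ : f y₁ = Fin.castAdd r (G.endL e))
    (h₂ : f y₂ = Fin.castAdd r (G.endR e)) :
    ∑ x, eps G (f x) * augM G (f x) (Fin.castAdd r e) = 0 := by
  have hLR : G.endL e ≠ G.endR e := by
    intro hh
    have h1 := G.endL_XL e
    rw [hh, G.eXX_mem e he] at h1
    exact BipSide.noConfusion h1
  have hne : y₁ ≠ y₂ := by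
    intro hh
    rw [hh, h₂] at h₁
    exact hLR (Fin.ext (by simpa using congrArg Fin.val h₁)).symm
  apply sum_two _ y₁ y₂ hne
  intro x
  by_cases hx1 : x = y₁
  · subst hx1
    rw [if_pos rfl, if_neg hne, h₁, eps_vertex, augM_apply_vertex, if_pos (Or.inl rfl),
      G.endL_XL e]
    simp
  · by_cases hx2 : x = y₂
    · subst hx2
      rw [if_neg hx1, if_pos rfl, h₂, eps_vertex, augM_apply_vertex, if_pos (Or.inr rfl),
        G.eXX_mem e he]
      simp
    · rw [if_neg hx1, if_neg hx2, add_zero]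
      have hz : augM G (f x) (Fin.castAdd r e) = 0 := by
        by_contra hnz
        rcases support_classify G hnz with hc | hc | ⟨t, ht, -⟩
        · exact hx1 (hf (by rw [hc, h₁]))
        · exact hx2 (hf (by rw [hc, h₂]))
        · rw [he] at ht; cases ht
      rw [hz, mul_zero]

lemma column_zero_some (G : SCCBipartite nV nE r) {k : ℕ} (f : Fin k → Fin (nV + r))
    (hf : Function.Injective f) (e : Fin nE) (i : Fin (r + 1)) (hc : G.eClass e = some i)
    (hnotR : ∀ x : Fin k, f x ≠ Fin.castAdd r (G.endR e))
    (y₁ y₂ : Fin k) (h₁ : f y₁ = Fin.castAdd r (G.endL e))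
    (h₂ : ((f y₂ : Fin (nV + r)) : ℕ) = nV + (i : ℕ)) :
    ∑ x, eps G (f x) * augM G (f x) (Fin.castAdd r e) = 0 := by
  have hUUe : G.side (G.endR e) = BipSide.UU := (G.eI_mem e i hc).1
  have hne : y₁ ≠ y₂ := by
    intro hh
    rw [hh] at h₁
    rw [h₁] at h₂
    have := (G.endL e).isLt
    simp at h₂
    omega
  apply sum_two _ y₁ y₂ hne
  intro x
  by_cases hx1 : x = y₁
  · subst hx1
    rw [if_pos rfl, if_neg hne, h₁, eps_vertex, augM_apply_vertex, if_pos (Or.inl rfl),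
      G.endL_XL e]
    simp
  · by_cases hx2 : x = y₂
    · subst hx2
      rw [if_neg hx1, if_pos rfl,
        augM_apply_ge' G _ e i h₂, if_pos hc, eps_class G (by omega)]
      norm_num
    · rw [if_neg hx1, if_neg hx2, add_zero]
      have hz : augM G (f x) (Fin.castAdd r e) = 0 := by
        by_contra hnz
        rcases support_classify G hnz with hcc | hcc | ⟨t, ht, hvt⟩
        · exact hx1 (hf (by rw [hcc, h₁]))
        · exact hnotR x hcc
        · rw [hc] at ht
          have hit : (i : ℕ) = (t : ℕ) := by rw [Option.some_injective _ ht]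
          exact hx2 (hf (Fin.ext (by omega)))
      rw [hz, mul_zero]

end SCCAux


namespace SCCAux

open Matrix

lemma main : ∀ (m : ℕ), ∀ {nV nE r : ℕ} (G : SCCBipartite nV nE r), msr G ≤ m →
    ∀ (k : ℕ) (f : Fin k → Fin (nV + r)) (g : Fin k → Fin nE),
      Function.Injective f → Function.Injective g →
      ((augM G).submatrix f (Fin.castAdd r ∘ g)).det ∈ Set.range (SignType.cast (α := ℤ)) := by
  intro m
  induction m using Nat.strong_induction_on with
  | _ m ihm =>
  intro nV nE r G hG k
  induction k using Nat.strong_induction_on with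
  | _ k ihk =>
  cases k with
  | zero =>
      intro f g _ _
      exact ⟨1, by simp [Matrix.det_fin_zero]⟩
  | succ k =>
      intro f g hf hg
      by_cases hUU : ∃ (x : Fin (k + 1)) (hx : ((f x : Fin (nV + r)) : ℕ) < nV),
          G.side ⟨(f x : ℕ), hx⟩ = BipSide.UU
      · obtain ⟨xu, hxu, hside⟩ := hUU
        by_cases hedge : ∃ e : Fin nE, G.endR e = ⟨(f xu : ℕ), hxu⟩
        · -- a selected `U`-vertex with an edge: move it to `X_R` and recurse on fewer
          -- classed edges
          obtain ⟨e₀, he₀⟩ := hedge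
          have hmlt := msr_moveU_lt G _ hside he₀
          have IH := ihm (msr (moveU G ⟨(f xu : ℕ), hxu⟩ hside))
            (lt_of_lt_of_le hmlt hG) (moveU G ⟨(f xu : ℕ), hxu⟩ hside) le_rfl
            (k + 1) f g hf hg
          suffices hdd : ((augM (moveU G ⟨(f xu : ℕ), hxu⟩ hside)).submatrix f
              (Fin.castAdd r ∘ g)).det = ((augM G).submatrix f (Fin.castAdd r ∘ g)).det by
            rw [← hdd]; exact IH
          have hfxu : f xu = Fin.castAdd r ⟨(f xu : ℕ), hxu⟩ := by apply Fin.ext; simp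
          by_cases hcsel : ∃ x₀ : Fin (k + 1),
              ((f x₀ : Fin (nV + r)) : ℕ) = nV + (G.group ⟨(f xu : ℕ), hxu⟩ : ℕ)
          · obtain ⟨x₀, hx₀⟩ := hcsel
            have hx₀u : x₀ ≠ xu := by
              intro hh
              rw [hh] at hx₀
              omega
            have heq : (augM (moveU G ⟨(f xu : ℕ), hxu⟩ hside)).submatrix f
                (Fin.castAdd r ∘ g) =
                ((augM G).submatrix f (Fin.castAdd r ∘ g)).updateRow x₀
                  (((augM G).submatrix f (Fin.castAdd r ∘ g)) x₀ +
                    (1 : ℤ) • ((augM G).submatrix f (Fin.castAdd r ∘ g)) xu) := by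
              ext x j
              simp only [Matrix.submatrix_apply, Function.comp_apply]
              rw [augM_moveU_apply]
              by_cases hx : x = x₀
              · subst hx
                rw [Matrix.updateRow_self, if_pos hx₀]
                simp only [Pi.add_apply, Pi.smul_apply, Matrix.submatrix_apply,
                  Function.comp_apply, smul_eq_mul, one_mul]
                rw [← hfxu]
              · rw [Matrix.updateRow_ne hx, Matrix.submatrix_apply,
                  if_neg (fun hcon => hx (hf (Fin.ext (hcon.trans hx₀.symm)))), add_zero]
                rfl
            rw [heq]
            exact Matrix.det_updateRow_add_smul_self _ hx₀u 1
          · have heq : (augM (moveU G ⟨(f xu : ℕ), hxu⟩ hside)).submatrix f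
                (Fin.castAdd r ∘ g) = (augM G).submatrix f (Fin.castAdd r ∘ g) := by
              ext x j
              simp only [Matrix.submatrix_apply, Function.comp_apply]
              rw [augM_moveU_apply, if_neg (fun hcon => hcsel ⟨x, hcon⟩), add_zero]
            rw [heq]
        · -- a selected `U`-vertex with no edge: its row is zero
          refine ⟨0, ?_⟩
          have hz : ∀ j, ((augM G).submatrix f (Fin.castAdd r ∘ g)) xu j = 0 := by
            intro j
            simp only [Matrix.submatrix_apply, Function.comp_apply]
            rw [augM_apply_lt G _ _ hxu, if_neg]
            rintro (h | h)
            · have hx := G.endL_XL (g j)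
              rw [h, hside] at hx
              exact BipSide.noConfusion hx
            · exact hedge ⟨g j, h⟩
          rw [Matrix.det_eq_zero_of_row_eq_zero xu hz]
          simp
      · -- no selected `U`-vertex
        push_neg at hUU
        by_cases hcol : ∃ (j i₀ : Fin (k + 1)), ∀ i, i ≠ i₀ →
            ((augM G).submatrix f (Fin.castAdd r ∘ g)) i j = 0
        · -- a column with at most one nonzero entry: Laplace expansion
          obtain ⟨j, i₀, hcol⟩ := hcol
          rw [Matrix.det_succ_column _ j,
            Fintype.sum_eq_single i₀ (fun i hi => by rw [hcol i hi]; ring)]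
          apply sign_mem_mul (sign_mem_mul (sign_mem_pow_neg_one _) ?_) ?_
          · exact augM_entry_mem G (f i₀) ((Fin.castAdd r ∘ g) j)
          · have hmm := ihk k (Nat.lt_succ_self k) (f ∘ i₀.succAbove) (g ∘ j.succAbove)
              (hf.comp Fin.succAbove_right_injective) (hg.comp Fin.succAbove_right_injective)
            rw [Matrix.submatrix_submatrix]
            exact hmm
        · -- every column has at least two nonzero entries: rows are dependent
          push_neg at hcol
          refine ⟨0, ?_⟩
          have hdet0 : ((augM G).submatrix f (Fin.castAdd r ∘ g)).det = 0 := by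
            rw [← Matrix.exists_vecMul_eq_zero_iff]
            refine ⟨fun x => eps G (f x), ?_, ?_⟩
            · intro h0
              apply eps_ne_zero G (f 0)
              have := congrFun h0 0
              simpa using this
            · funext j
              obtain ⟨x₁, -, hx₁⟩ := hcol j 0
              obtain ⟨x₂, hx₂1, hx₂⟩ := hcol j x₁
              simp only [Matrix.submatrix_apply, Function.comp_apply] at hx₁ hx₂
              have hsum : ∑ x, eps G (f x) * augM G (f x) (Fin.castAdd r (g j)) = 0 := by
                have hnotR : G.eClass (g j) ≠ none →
                    ∀ x : Fin (k + 1), f x ≠ Fin.castAdd r (G.endR (g j)) := by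
                  intro hcs x hx
                  cases hcc : G.eClass (g j) with
                  | none => exact hcs hcc
                  | some t =>
                      have hRU : G.side (G.endR (g j)) = BipSide.UU :=
                        (G.eI_mem (g j) t hcc).1
                      have hlt : ((f x : Fin (nV + r)) : ℕ) < nV := by rw [hx]; simp
                      apply hUU x hlt
                      have hfv : (⟨(f x : ℕ), hlt⟩ : Fin nV) = G.endR (g j) := by
                        apply Fin.ext; simp [hx]
                      rw [hfv]
                      exact hRU
                cases hcs : G.eClass (g j) with
                | none =>
                    have opt : ∀ {x : Fin (k + 1)},
                        augM G (f x) (Fin.castAdd r (g j)) ≠ 0 →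
                        f x = Fin.castAdd r (G.endL (g j)) ∨
                          f x = Fin.castAdd r (G.endR (g j)) := by
                      intro x hx
                      rcases support_classify G hx with h | h | ⟨t, ht, -⟩
                      · exact Or.inl h
                      · exact Or.inr h
                      · rw [hcs] at ht; cases ht
                    rcases opt hx₁ with h1 | h1 <;> rcases opt hx₂ with h2 | h2
                    · exact absurd (hf (h2.trans h1.symm)) hx₂1
                    · exact column_zero_none G f hf (g j) hcs x₁ x₂ h1 h2
                    · exact column_zero_none G f hf (g j) hcs x₂ x₁ h2 h1
                    · exact absurd (hf (h2.trans h1.symm)) hx₂1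
                | some i =>
                    have hnotR' : ∀ x : Fin (k + 1),
                        f x ≠ Fin.castAdd r (G.endR (g j)) :=
                      hnotR (by rw [hcs]; exact fun hh => by cases hh)
                    have opt : ∀ {x : Fin (k + 1)},
                        augM G (f x) (Fin.castAdd r (g j)) ≠ 0 →
                        f x = Fin.castAdd r (G.endL (g j)) ∨
                          ((f x : Fin (nV + r)) : ℕ) = nV + (i : ℕ) := by
                      intro x hx
                      rcases support_classify G hx with h | h | ⟨t, ht, hvt⟩
                      · exact Or.inl h
                      · exact absurd h (hnotR' x)
                      · right
                        rw [hcs] at ht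
                        have hit : (i : ℕ) = (t : ℕ) := by
                          rw [Option.some_injective _ ht]
                        omega
                    rcases opt hx₁ with h1 | h1 <;> rcases opt hx₂ with h2 | h2
                    · exact absurd (hf (h2.trans h1.symm)) hx₂1
                    · exact column_zero_some G f hf (g j) i hcs hnotR' x₁ x₂ h1 h2
                    · exact column_zero_some G f hf (g j) i hcs hnotR' x₂ x₁ h2 h1
                    · exact absurd (hf (Fin.ext (by omega))) hx₂1
              show Matrix.vecMul _ _ j = (0 : Fin (k + 1) → ℤ) j
              simp only [Matrix.vecMul, dotProduct, Matrix.submatrix_apply,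
                Function.comp_apply, Pi.zero_apply]
              exact hsum
          rw [hdet0]
          simp

end SCCAux

/-- The `(n_V + r) × n_E` submatrix of the augmented incidence matrix `M` consisting of its
first `n_E` columns (the columns indexed by the edges of `G`) is totally unimodular. -/
theorem augM_firstCols_isTotallyUnimodular {nV nE r : ℕ} (G : SCCBipartite nV nE r) :
    ((augM G).submatrix id (Fin.castAdd r)).IsTotallyUnimodular := by
  intro k f g hf hg
  rw [Matrix.submatrix_submatrix, Function.id_comp]
  exact SCCAux.main (SCCAux.msr G) G le_rfl k f g hf hg
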